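/- Let L > 0 and 0 < ε < L/2. Then for all x ∈ [ε, L−ε] and all t with 0 < t ≤ (L−2ε)²/4, one has ∫_ε^{L−ε} p(t, x, y)² dy ≥ e^{−1/2}/(4π√t). -/

import Mathlib

noncomputable def pG (t x y : ℝ) : ℝ :=
  Real.exp (-(x - y) ^ 2 / (4 * t)) / Real.sqrt (4 * Real.pi * t)

/-!
The square of the kernel is at least `e^{-1/2} / (4πt)` wherever `|x - y| ≤ √t`. The
hypothesis on `t` makes `√t` at most the length of `[ε, L - ε]`, so this interval contains a
window of length `√t` around `x`; integrating the pointwise bound over that window alone gives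
`√t · e^{-1/2} / (4πt)`.
-/

open Real Set MeasureTheory intervalIntegral

lemma pG_sq {t : ℝ} (ht : 0 < t) (x y : ℝ) :
    pG t x y ^ 2 = exp (-(x - y) ^ 2 / (2 * t)) / (4 * π * t) := by
  rw [pG, div_pow, sq_sqrt (by positivity), sq, ← exp_add]
  congr 2
  field_simp
  ring

lemma exp_neg_half_div_le_pG_sq {t x y : ℝ} (ht : 0 < t) (hxy : (x - y) ^ 2 ≤ t) :
    exp (-1 / 2) / (4 * π * t) ≤ pG t x y ^ 2 := by
  rw [pG_sq ht]
  refine div_le_div_of_nonneg_right (exp_le_exp.2 ?_) (by positivity)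
  rw [le_div_iff₀ (by positivity)]
  linarith

lemma mul_le_integral_of_forall_le {f : ℝ → ℝ} {a b c : ℝ} (hab : a ≤ b)
    (hf : IntervalIntegrable f volume a b) (h : ∀ y ∈ Icc a b, c ≤ f y) :
    (b - a) * c ≤ ∫ y in a..b, f y := by
  simpa [intervalIntegral.integral_const] using integral_mono_on hab intervalIntegrable_const hf h

lemma exists_window_mem_Icc {α β x s : ℝ} (hx : x ∈ Icc α β) (hs₀ : 0 ≤ s) (hs : s ≤ β - α) :
    ∃ a, α ≤ a ∧ a + s ≤ β ∧ x ∈ Icc a (a + s) := by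
  rcases le_total (x - s) α with h | h
  · exact ⟨α, le_rfl, by linarith, hx.1, by linarith⟩
  · exact ⟨x - s, h, by linarith [hx.2], by linarith, by linarith⟩

theorem stmt_18_general (L ε : ℝ) :
    ∀ x ∈ Set.Icc ε (L - ε), ∀ t : ℝ, 0 < t → t ≤ (L - 2 * ε) ^ 2 / 4 →
      (∫ y in ε..(L - ε), (pG t x y) ^ 2) ≥ Real.exp (-1 / 2) / (4 * Real.pi * Real.sqrt t) := by
  intro x hx t ht ht_le
  have hεL : 0 ≤ L - 2 * ε := by linarith [hx.1, hx.2]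
  have hsqrt : √t ≤ (L - ε) - ε := by
    have : √t ≤ (L - 2 * ε) / 2 := (sqrt_le_left (by positivity)).2 (by linarith)
    linarith
  obtain ⟨a, hεa, haL, hxa⟩ := exists_window_mem_Icc hx (sqrt_nonneg t) hsqrt
  have hcont : Continuous fun y => pG t x y ^ 2 := by unfold pG; fun_prop
  have hpos : 0 < √t := sqrt_pos.2 ht
  calc exp (-1 / 2) / (4 * π * √t) = (a + √t - a) * (exp (-1 / 2) / (4 * π * t)) := by
        rw [add_sub_cancel_left]
        field_simp
        rw [sq_sqrt ht.le]
    _ ≤ ∫ y in a..a + √t, pG t x y ^ 2 :=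
        mul_le_integral_of_forall_le (by linarith) (hcont.intervalIntegrable _ _) fun y hy =>
          exp_neg_half_div_le_pG_sq ht
            ((Real.sq_le ht.le).2 ⟨by linarith [hy.2, hxa.1], by linarith [hy.1, hxa.2]⟩)
    _ ≤ ∫ y in ε..L - ε, pG t x y ^ 2 :=
        integral_mono_interval hεa (by linarith) haL
          (Filter.Eventually.of_forall fun _ => sq_nonneg _) (hcont.intervalIntegrable _ _)

theorem stmt_18 (L ε : ℝ) (hL : 0 < L) (hε : 0 < ε) (hεL : ε < L / 2) :
    ∀ x ∈ Set.Icc ε (L - ε), ∀ t : ℝ, 0 < t → t ≤ (L - 2 * ε) ^ 2 / 4 →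
      (∫ y in ε..(L - ε), (pG t x y) ^ 2) ≥ Real.exp (-1 / 2) / (4 * Real.pi * Real.sqrt t) :=
  stmt_18_general L ε
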